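/- Lengthening subsystem codes: If there exists an ((n,K,R,d))_q Clifford subsystem code with K > 1, then there exists an ((n+1, K, R, d'))_q Clifford subsystem code with minimum distance d' ≥ d that is pure to 1. -/

import Mathlib

open Finset

/-- Symplectic weight of a vector `(a|b) ∈ F_q^n × F_q^n`. -/
noncomputable def swt {F : Type} [Field F] {n : ℕ} (v : (Fin n → F) × (Fin n → F)) : ℕ :=
  {i : Fin n | ¬(v.1 i = 0 ∧ v.2 i = 0)}.ncard

/-- Minimum symplectic weight of a nonzero element of a set. -/
noncomputable def minSwt {F : Type} [Field F] {n : ℕ} (S : Set ((Fin n → F) × (Fin n → F))) : ℕ :=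
  sInf (swt '' (S \ {0}))

/-- The trace-symplectic form on `F_q^{2n}`. -/
noncomputable def trSympForm (p : ℕ) {F : Type} [Field F] [Fintype F] [CharP F p] {n : ℕ}
    (u v : (Fin n → F) × (Fin n → F)) : ZMod p :=
  letI := ZMod.algebra F p
  Algebra.trace (ZMod p) F (∑ i, (v.1 i * u.2 i - u.1 i * v.2 i))

/-- The trace-symplectic dual of a set of vectors in `F_q^{2n}`. -/
def sympDual (p : ℕ) {F : Type} [Field F] [Fintype F] [CharP F p] {n : ℕ}
    (C : Set ((Fin n → F) × (Fin n → F))) : Set ((Fin n → F) × (Fin n → F)) :=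
  {v | ∀ w ∈ C, trSympForm p v w = 0}

/-- `C` (an additive code in `F_q^{2n}`) defines an `((n,K,R,d))_q` Clifford subsystem code. -/
def IsSubsysCode (p : ℕ) {F : Type} [Field F] [Fintype F] [CharP F p] {n : ℕ}
    (C : AddSubgroup ((Fin n → F) × (Fin n → F))) (K R d : ℕ) : Prop :=
  let Ds : Set ((Fin n → F) × (Fin n → F)) := ↑C ∩ sympDual p ↑C
  Nat.card Ds * (K * R) = Fintype.card F ^ n ∧
  Nat.card C * K = Fintype.card F ^ n * R ∧
  (sympDual p Ds = ↑C → d = minSwt (sympDual p Ds)) ∧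
  (sympDual p Ds ≠ ↑C → d = minSwt (sympDual p Ds \ ↑C))

/-- The subsystem code defined by `C` is pure to `d'`. -/
def PureTo {F : Type} [Field F] {n : ℕ}
    (C : AddSubgroup ((Fin n → F) × (Fin n → F))) (d' : ℕ) : Prop :=
  ∀ v ∈ C, v ≠ 0 → d' ≤ swt v

/-- The subsystem code defined by `C` is `F_q`-linear. -/
def FqLinear {F : Type} [Field F] {n : ℕ}
    (C : AddSubgroup ((Fin n → F) × (Fin n → F))) : Prop :=
  ∀ (a : F), ∀ v ∈ C, a • v ∈ C

/-- Hamming weight.-/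
noncomputable def hwt {F : Type} [Field F] {n : ℕ} (v : Fin n → F) : ℕ := {i | v i ≠ 0}.ncard

/-- Minimum Hamming weight of a nonzero element of a set. -/
noncomputable def minHwt {F : Type} [Field F] {n : ℕ} (S : Set (Fin n → F)) : ℕ :=
  sInf (hwt '' (S \ {0}))

/-- Euclidean dual. -/
def euclDual {F : Type} [Field F] {n : ℕ} (C : Set (Fin n → F)) : Set (Fin n → F) :=
  {x | ∀ y ∈ C, ∑ i, x i * y i = 0}

/-- Hermitian dual (with respect to `x ↦ x^q`). -/
def hermDual (q : ℕ) {K : Type} [Field K] {n : ℕ} (C : Set (Fin n → K)) : Set (Fin n → K) :=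
  {x | ∀ y ∈ C, ∑ i, x i ^ q * y i = 0}

/-- Cyclotomic coset of `a` modulo `n` (w.r.t. multiplier `q`). -/
def cycCoset (q n : ℕ) (a : ZMod n) : Set (ZMod n) := {x | ∃ i : ℕ, x = a * (q : ZMod n) ^ i}

/-! Lengthening adjoins one coordinate on which the new code contains every `(x | 0)`.
Nondegeneracy of the trace makes the trace-symplectic dual commute with this operation, so
`D' = C' ∩ C'^⊥` and `D'^⊥` are the lengthenings of `D` and `D^⊥`. Every cardinality gains a
factor `q`, so `K` and `R` are unchanged, and since truncating a vector does not increase its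
symplectic weight, `swt (D'^⊥ \ C') ≥ swt (D^⊥ \ C) = d`. This needs `D^⊥ ≠ C`, and that is
where `K > 1` enters: the duality bound `|S| |S^⊥| ≥ q^{2n}` for `S = D` would otherwise give
`K² ≤ 1`. -/

abbrev SympSpace (R : Type*) (n : ℕ) := (Fin n → R) × (Fin n → R)

def AddMonoidHom.orthogonal {V W M : Type*} [AddCommGroup V] [AddCommGroup W] [AddCommGroup M]
    (β : V →+ W →+ M) (S : Set W) : AddSubgroup V where
  carrier := {v | ∀ w ∈ S, β v w = 0}
  zero_mem' := by simp
  add_mem' ha hb w hw := by simp [ha w hw, hb w hw]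
  neg_mem' ha w hw := by simp [ha w hw]

theorem AddMonoidHom.card_le_card_mul_card_orthogonal {p : ℕ} [Fact p.Prime]
    {V W : Type*} [AddCommGroup V] [Finite V] [AddCommGroup W] [Module (ZMod p) W]
    (β : V →+ W →+ ZMod p) (S : Submodule (ZMod p) W) [Finite S] :
    Nat.card V ≤ Nat.card S * Nat.card (β.orthogonal S) := by
  let Φ : V →+ Module.Dual (ZMod p) S :=
    { toFun := fun v => ((β v).comp S.toAddSubgroup.subtype).toZModLinearMap p
      map_zero' := LinearMap.ext fun _ => by simp
      map_add' := fun _ _ => LinearMap.ext fun _ => by simp }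
  have hker : Φ.ker = β.orthogonal S := by
    ext v
    simp [Φ, LinearMap.ext_iff, AddMonoidHom.orthogonal]
  have hdual : Nat.card (Module.Dual (ZMod p) S) = Nat.card S := by
    rw [Module.natCard_eq_pow_finrank (K := ZMod p), Subspace.dual_finrank_eq,
      ← Module.natCard_eq_pow_finrank]
  have : Finite (Module.Dual (ZMod p) S) := Module.finite_of_finite (ZMod p)
  calc Nat.card V = Nat.card Φ.range * Nat.card Φ.ker := by
        rw [← AddSubgroup.index_ker, mul_comm, AddSubgroup.card_mul_index]
    _ ≤ Nat.card S * Nat.card (β.orthogonal S) := by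
        rw [← hdual, hker]
        exact Nat.mul_le_mul_right _ (Nat.card_le_card_of_injective _ Subtype.val_injective)

section Trace

variable (p : ℕ) (F : Type) [Field F] [Fintype F] [CharP F p]

noncomputable def primeTrace : F →+ ZMod p :=
  letI := ZMod.algebra F p
  (Algebra.trace (ZMod p) F).toAddMonoidHom

variable {p F}

theorem eq_zero_of_forall_primeTrace_mul_eq_zero {c : F} (h : ∀ x, primeTrace p F (x * c) = 0) :
    c = 0 := by
  let _ := ZMod.algebra F p
  have : Fact p.Prime := ⟨CharP.char_is_prime F p⟩
  exact (traceForm_nondegenerate (ZMod p) F).1 c fun x => by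
    rw [Algebra.traceForm_apply, mul_comm]
    exact h x

end Trace

section Truncation

variable {R : Type*} [AddCommGroup R] {n : ℕ}

@[simps]
def truncate : SympSpace R (n + 1) →+ SympSpace R n where
  toFun w := (Fin.init w.1, Fin.init w.2)
  map_zero' := rfl
  map_add' _ _ := rfl

def extend (s : SympSpace R n) (x : R) : SympSpace R (n + 1) := (Fin.snoc s.1 x, Fin.snoc s.2 0)

@[simp]
theorem truncate_extend (s : SympSpace R n) (x : R) : truncate (extend s x) = s := by
  simp [extend]

theorem extend_truncate {w : SympSpace R (n + 1)} (hw : w.2 (Fin.last n) = 0) :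
    extend (truncate w) (w.1 (Fin.last n)) = w :=
  Prod.ext (Fin.snoc_init_self w.1)
    (by simp only [extend, truncate_apply, ← hw, Fin.snoc_init_self])

/-- The vectors `(a x | b 0)` with `(a | b) ∈ S` and `x` arbitrary. -/
def lengthenSet (S : Set (SympSpace R n)) : Set (SympSpace R (n + 1)) :=
  {w | truncate w ∈ S ∧ w.2 (Fin.last n) = 0}

def AddSubgroup.lengthen (C : AddSubgroup (SympSpace R n)) : AddSubgroup (SympSpace R (n + 1)) :=
  C.comap truncate ⊓
    ((Pi.evalAddMonoidHom (fun _ => R) (Fin.last n)).comp (AddMonoidHom.snd _ _)).ker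

theorem AddSubgroup.coe_lengthen (C : AddSubgroup (SympSpace R n)) :
    (C.lengthen : Set (SympSpace R (n + 1))) = lengthenSet C := rfl

@[simp]
theorem extend_mem_lengthenSet_iff {S : Set (SympSpace R n)} {s : SympSpace R n} {x : R} :
    extend s x ∈ lengthenSet S ↔ s ∈ S := by
  simp [lengthenSet, extend]

theorem lengthenSet_inter (S T : Set (SympSpace R n)) :
    lengthenSet S ∩ lengthenSet T = lengthenSet (S ∩ T) := by
  ext w
  simp only [lengthenSet, Set.mem_inter_iff, Set.mem_ofPred_eq]
  tauto

theorem lengthenSet_diff (S T : Set (SympSpace R n)) :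
    lengthenSet S \ lengthenSet T = lengthenSet (S \ T) := by
  ext w
  simp only [lengthenSet, Set.mem_sdiff, Set.mem_ofPred_eq]
  tauto

theorem lengthenSet_injective : Function.Injective (lengthenSet : Set (SympSpace R n) → _) := by
  intro S T h
  ext s
  rw [← extend_mem_lengthenSet_iff (x := 0), h, extend_mem_lengthenSet_iff]

def lengthenSetEquiv (S : Set (SympSpace R n)) : lengthenSet S ≃ S × R where
  toFun w := (⟨truncate w, w.2.1⟩, w.1.1 (Fin.last n))
  invFun sx := ⟨extend sx.1 sx.2, extend_mem_lengthenSet_iff.2 sx.1.2⟩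
  left_inv w := Subtype.ext (extend_truncate w.2.2)
  right_inv sx := by simp [extend]

theorem card_lengthenSet (S : Set (SympSpace R n)) :
    Nat.card (lengthenSet S) = Nat.card S * Nat.card R := by
  rw [Nat.card_congr (lengthenSetEquiv S), Nat.card_prod]

theorem AddSubgroup.card_lengthen (C : AddSubgroup (SympSpace R n)) :
    Nat.card C.lengthen = Nat.card C * Nat.card R :=
  card_lengthenSet (C : Set (SympSpace R n))

end Truncation

section SymplecticForm

variable {R : Type*} [CommRing R] {n : ℕ}

def sympForm (u v : SympSpace R n) : R := ∑ i, (v.1 i * u.2 i - u.1 i * v.2 i)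

@[simp]
theorem sympForm_zero_right (u : SympSpace R n) : sympForm u 0 = 0 := by
  simp [sympForm]

theorem sympForm_add_left (u u' v : SympSpace R n) :
    sympForm (u + u') v = sympForm u v + sympForm u' v := by
  simp only [sympForm, ← sum_add_distrib, Prod.fst_add, Prod.snd_add, Pi.add_apply]
  exact sum_congr rfl fun _ _ => by ring

theorem sympForm_add_right (u v v' : SympSpace R n) :
    sympForm u (v + v') = sympForm u v + sympForm u v' := by
  simp only [sympForm, ← sum_add_distrib, Prod.fst_add, Prod.snd_add, Pi.add_apply]
  exact sum_congr rfl fun _ _ => by ring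

theorem sympForm_swap (u v : SympSpace R n) : sympForm u v = -sympForm v u := by
  simp only [sympForm, ← sum_neg_distrib]
  exact sum_congr rfl fun _ _ => by ring

theorem sympForm_extend (v : SympSpace R (n + 1)) (s : SympSpace R n) (x : R) :
    sympForm v (extend s x) = sympForm (truncate v) s + x * v.2 (Fin.last n) := by
  simp only [sympForm, extend, truncate_apply, Fin.init, Fin.sum_univ_castSucc, Fin.snoc_castSucc,
    Fin.snoc_last, mul_zero, sub_zero]

end SymplecticForm

section Weight

variable {F : Type} [Field F] {n : ℕ}

theorem one_le_swt {v : SympSpace F n} (hv : v ≠ 0) : 1 ≤ swt v := by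
  obtain ⟨i, hi⟩ : ∃ i, ¬(v.1 i = 0 ∧ v.2 i = 0) := by
    by_contra! h
    exact hv (Prod.ext (funext fun i => (h i).1) (funext fun i => (h i).2))
  exact (Set.ncard_pos (Set.toFinite _)).2 ⟨i, hi⟩

theorem pureTo_one (C : AddSubgroup (SympSpace F n)) : PureTo C 1 :=
  fun _ _ => one_le_swt

theorem swt_truncate_le (w : SympSpace F (n + 1)) : swt (truncate w) ≤ swt w :=
  Set.ncard_le_ncard_of_injOn Fin.castSucc (fun _ hi => hi) (Fin.castSucc_injective n).injOn
    (Set.toFinite _)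

theorem minSwt_le_swt {S : Set (SympSpace F n)} {v : SympSpace F n} (hv : v ∈ S) (hv0 : v ≠ 0) :
    minSwt S ≤ swt v :=
  Nat.sInf_le ⟨v, ⟨hv, hv0⟩, rfl⟩

theorem minSwt_le_minSwt_lengthenSet {S : Set (SympSpace F n)} (h0 : 0 ∉ S) (hS : S.Nonempty) :
    minSwt S ≤ minSwt (lengthenSet S) := by
  obtain ⟨s, hs⟩ := hS
  have hs0 : extend s 0 ≠ 0 := fun h => by
    obtain rfl : s = 0 := by rw [← truncate_extend s 0, h, map_zero]
    exact h0 hs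
  refine le_csInf ⟨_, extend s 0, ⟨extend_mem_lengthenSet_iff.2 hs, hs0⟩, rfl⟩ ?_
  rintro _ ⟨w, ⟨hw, hw0⟩, rfl⟩
  exact (minSwt_le_swt hw.1 fun h => h0 (h ▸ hw.1)).trans (swt_truncate_le w)

end Weight

section TraceSymplectic

variable {p : ℕ} {F : Type} [Field F] [Fintype F] [CharP F p] {n : ℕ}

theorem trSympForm_eq_primeTrace (u v : SympSpace F n) :
    trSympForm p u v = primeTrace p F (sympForm u v) := rfl

variable (p F n) in
noncomputable def trSympFormHom : SympSpace F n →+ SympSpace F n →+ ZMod p :=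
  AddMonoidHom.mk'
    (fun u => AddMonoidHom.mk' (trSympForm p u) fun v v' => by
      simp [trSympForm_eq_primeTrace, sympForm_add_right])
    fun u u' => AddMonoidHom.ext fun v =>
      show trSympForm p (u + u') v = trSympForm p u v + trSympForm p u' v by
        simp [trSympForm_eq_primeTrace, sympForm_add_left]

theorem coe_orthogonal_trSympFormHom (S : Set (SympSpace F n)) :
    ((trSympFormHom p F n).orthogonal S : Set (SympSpace F n)) = sympDual p S := rfl

theorem subset_sympDual_inter_sympDual (S : Set (SympSpace F n)) :
    S ⊆ sympDual p (S ∩ sympDual p S) := fun v hv w hw => by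
  rw [trSympForm_eq_primeTrace, sympForm_swap, map_neg, ← trSympForm_eq_primeTrace, hw.2 v hv,
    neg_zero]

theorem sympDual_lengthenSet {S : Set (SympSpace F n)} (h0 : 0 ∈ S) :
    sympDual p (lengthenSet S) = lengthenSet (sympDual p S) := by
  ext v
  constructor
  · intro hv
    have hlast : v.2 (Fin.last n) = 0 := eq_zero_of_forall_primeTrace_mul_eq_zero fun x => by
      simpa [trSympForm_eq_primeTrace, sympForm_extend] using
        hv (extend 0 x) (extend_mem_lengthenSet_iff.2 h0)
    refine ⟨fun s hs => ?_, hlast⟩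
    simpa [trSympForm_eq_primeTrace, sympForm_extend] using
      hv (extend s 0) (extend_mem_lengthenSet_iff.2 hs)
  · rintro ⟨hv, hlast⟩ w hw
    rw [← extend_truncate hw.2, trSympForm_eq_primeTrace, sympForm_extend, hlast, mul_zero,
      add_zero]
    exact hv _ hw.1

theorem zero_mem_sympDual (S : Set (SympSpace F n)) : 0 ∈ sympDual p S :=
  ((trSympFormHom p F n).orthogonal S).zero_mem

theorem lengthenSet_inter_sympDual {S : Set (SympSpace F n)} (h0 : 0 ∈ S) :
    lengthenSet S ∩ sympDual p (lengthenSet S) = lengthenSet (S ∩ sympDual p S) := by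
  rw [sympDual_lengthenSet h0, lengthenSet_inter]

theorem card_sq_le_card_mul_card_sympDual (S : AddSubgroup (SympSpace F n)) :
    Fintype.card F ^ n * Fintype.card F ^ n ≤
      Nat.card S * Nat.card (sympDual p (S : Set (SympSpace F n))) := by
  have : Fact p.Prime := ⟨CharP.char_is_prime F p⟩
  let _ := ZMod.algebra F p
  calc Fintype.card F ^ n * Fintype.card F ^ n = Nat.card (SympSpace F n) := by simp
    _ ≤ _ :=
      (trSympFormHom p F n).card_le_card_mul_card_orthogonal (AddSubgroup.toZModSubmodule p S)

end TraceSymplectic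

section SubsystemCode

variable {p : ℕ} {F : Type} [Field F] [Fintype F] [CharP F p] {n K R d : ℕ}
  {C : AddSubgroup (SympSpace F n)}

theorem IsSubsysCode.sympDual_ne (hC : IsSubsysCode p C K R d) (hK : 1 < K) :
    sympDual p ((C : Set (SympSpace F n)) ∩ sympDual p C) ≠ C := by
  obtain ⟨hD, hCK, -, -⟩ := hC
  intro hE
  set q := Fintype.card F
  set D : Set (SympSpace F n) := ↑C ∩ sympDual p ↑C
  have hbound : q ^ n * q ^ n ≤ Nat.card D * Nat.card C := by
    have := card_sq_le_card_mul_card_sympDual (p := p)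
      (C ⊓ (trSympFormHom p F n).orthogonal (C : Set (SympSpace F n)))
    rwa [AddSubgroup.coe_inf, coe_orthogonal_trSympFormHom, hE] at this
  have hq : 0 < q ^ n := by positivity
  have hR : 0 < R := Nat.pos_of_ne_zero fun hR => by simp [hR] at hD; omega
  have : q ^ n * q ^ n * (K * K * R) ≤ q ^ n * q ^ n * R :=
    calc q ^ n * q ^ n * (K * K * R) ≤ Nat.card D * Nat.card C * (K * K * R) := by gcongr
      _ = Nat.card D * (K * R) * (Nat.card C * K) := by ring
      _ = q ^ n * q ^ n * R := by rw [hD, hCK]; ring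
  have hKKR : K * K * R ≤ R := Nat.le_of_mul_le_mul_left this (by positivity)
  have hK2 : 2 ≤ K := hK
  have : 2 * 2 * R ≤ K * K * R := by gcongr
  omega

theorem IsSubsysCode.lengthen (hC : IsSubsysCode p C K R d)
    (hE : sympDual p ((C : Set (SympSpace F n)) ∩ sympDual p C) ≠ C) :
    IsSubsysCode p C.lengthen K R
      (minSwt (lengthenSet (sympDual p ((C : Set (SympSpace F n)) ∩ sympDual p C) \ C))) := by
  obtain ⟨hD, hCK, -, -⟩ := hC
  have h0 : (0 : SympSpace F n) ∈ (C : Set (SympSpace F n)) ∩ sympDual p C :=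
    ⟨C.zero_mem, zero_mem_sympDual _⟩
  simp only [IsSubsysCode, AddSubgroup.coe_lengthen, lengthenSet_inter_sympDual C.zero_mem,
    sympDual_lengthenSet h0, lengthenSet_diff]
  refine ⟨?_, ?_, fun h => absurd (lengthenSet_injective h) hE, fun _ => trivial⟩
  · rw [card_lengthenSet, Nat.card_eq_fintype_card (α := F), pow_succ]
    linear_combination Fintype.card F * hD
  · rw [AddSubgroup.card_lengthen, Nat.card_eq_fintype_card (α := F), pow_succ]
    linear_combination Fintype.card F * hCK

end SubsystemCode

theorem lengthening_subsystem_codes_general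
    (p : ℕ) (F : Type) [Field F] [Fintype F] [CharP F p]
    (n K R d : ℕ) (hK : 1 < K)
    (h : ∃ C : AddSubgroup ((Fin n → F) × (Fin n → F)), IsSubsysCode p C K R d) :
    ∃ d' : ℕ, d ≤ d' ∧
      ∃ C : AddSubgroup ((Fin (n + 1) → F) × (Fin (n + 1) → F)),
        IsSubsysCode p C K R d' ∧ PureTo C 1 := by
  obtain ⟨C, hC⟩ := h
  have hE := hC.sympDual_ne hK
  refine ⟨_, ?_, C.lengthen, hC.lengthen hE, pureTo_one _⟩
  rw [hC.2.2.2 hE]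
  exact minSwt_le_minSwt_lengthenSet (fun h => h.2 C.zero_mem)
    (Set.nonempty_of_not_subset fun h => hE (h.antisymm (subset_sympDual_inter_sympDual _)))

/-- Lengthening subsystem codes.  If there exists an
`((n,K,R,d))_q` Clifford subsystem code with `K > 1`, then there exists an
`((n+1, K, R, d'))_q` Clifford subsystem code with `d' ≥ d` that is pure to 1. -/
theorem lengthening_subsystem_codes
    (p : ℕ) (hp : p.Prime) (F : Type) [Field F] [Fintype F] [CharP F p]
    (n K R d : ℕ) (hK : 1 < K)
    (h : ∃ C : AddSubgroup ((Fin n → F) × (Fin n → F)), IsSubsysCode p C K R d) :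
    ∃ d' : ℕ, d ≤ d' ∧
      ∃ C : AddSubgroup ((Fin (n + 1) → F) × (Fin (n + 1) → F)),
        IsSubsysCode p C K R d' ∧ PureTo C 1 :=
  lengthening_subsystem_codes_general p F n K R d hK h
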